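/- Let K be a type of keys with decidable equality and V a type of values, let S be a schedule of length m, and let P be a strict partial order on positions {0,…,m−1} such that any two positions whose operations access the same key, at least one of them being a write, are P-comparable. Let L₁ and L₂ be two linear orders on the positions extending P, and let S₁ and S₂ be the schedules obtained by arranging the operations of S according to L₁ and L₂ respectively. Then for every initial store s₀, each read operation returns the same value in the execution of S₁ as in the execution of S₂, and the final stores after executing S₁ and S₂ from s₀ are equal. -/

import Mathlib

/-- An operation over keys `K` and values `V`: `write k v` or `read k`. -/
inductive Op (K : Type*) (V : Type*) where
  | write (k : K) (v : V)
  | read (k : K)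

variable {K V : Type*} [DecidableEq K]

/-- The key accessed by an operation. -/
def Op.key : Op K V → K
  | Op.write k _ => k
  | Op.read k => k

/-- Whether an operation is a write. -/
def Op.isWrite : Op K V → Prop
  | Op.write _ _ => True
  | Op.read _ => False

/-- One execution step: a write updates the store, a read leaves it unchanged. -/
def step (s : K → V) : Op K V → K → V
  | Op.write k v => Function.update s k v
  | Op.read _ => s

/-- The store obtained by executing a schedule left to right from `s₀`. -/
def execStore (s₀ : K → V) (S : List (Op K V)) : K → V := S.foldl step s₀

/-!
The value of a key `k` after running a schedule depends only on the subsequence of writes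
to `k`. Any two writes to `k` conflict, so they are `P`-comparable, and every linear extension
of `P` lists them in the `P`-order; hence both arrangements contain the same subsequence of
writes to `k`. For a read of `k` at position `i`, the writes to `k` executed before it are, in
either arrangement, exactly those `P`-below `i`, so the read also sees the same subsequence.
-/

def Op.writesTo (k : K) : Op K V → Bool
  | Op.write k' _ => decide (k' = k)
  | Op.read _ => false

theorem Op.writesTo_iff {k : K} {op : Op K V} : op.writesTo k ↔ op.key = k ∧ op.isWrite := by
  cases op <;> simp [Op.writesTo, Op.key, Op.isWrite]

theorem execStore_cons (s : K → V) (op : Op K V) (L : List (Op K V)) :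
    execStore s (op :: L) = execStore (step s op) L :=
  rfl

theorem step_apply_of_not_writesTo {k : K} {op : Op K V} (h : ¬ op.writesTo k) (s : K → V) :
    step s op k = s k := by
  cases op with
  | read => rfl
  | write k' v => exact Function.update_of_ne (by simpa [Op.writesTo, eq_comm] using h) v s

theorem step_apply_congr {k : K} {s s' : K → V} (h : s k = s' k) (op : Op K V) :
    step s op k = step s' op k := by
  cases op with
  | read => exact h
  | write k' v => by_cases hk : k = k' <;> simp [step, hk, h]

theorem execStore_apply_congr {k : K} {s s' : K → V} (h : s k = s' k) (L : List (Op K V)) :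
    execStore s L k = execStore s' L k := by
  induction L generalizing s s' with
  | nil => exact h
  | cons op L ih => exact ih (step_apply_congr h op)

theorem execStore_filter_writesTo_apply (k : K) (s : K → V) (L : List (Op K V)) :
    execStore s (L.filter (·.writesTo k)) k = execStore s L k := by
  induction L generalizing s with
  | nil => rfl
  | cons op L ih =>
    by_cases h : op.writesTo k
    · rw [List.filter_cons_of_pos h, execStore_cons, execStore_cons, ih]
    · rw [List.filter_cons_of_neg h, execStore_cons, ih]
      exact execStore_apply_congr (step_apply_of_not_writesTo h s).symm L

section

variable {m : ℕ} {P : Fin m → Fin m → Prop} {σ σ₁ σ₂ : Equiv.Perm (Fin m)}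

/-- `σ t` is the element placed at position `t`, so `σ.symm i` is the position of `i`. -/
def IsLinearExtension (P : Fin m → Fin m → Prop) (σ : Equiv.Perm (Fin m)) : Prop :=
  ∀ i j, P i j → σ.symm i < σ.symm j

theorem IsLinearExtension.asymm (hσ : IsLinearExtension P σ) : Std.Asymm P :=
  ⟨fun i j hij hji => lt_asymm (hσ i j hij) (hσ j i hji)⟩

theorem IsLinearExtension.lt_iff_lt (hσ₁ : IsLinearExtension P σ₁)
    (hσ₂ : IsLinearExtension P σ₂) {i j : Fin m} (h : P i j ∨ P j i) :
    σ₁.symm i < σ₁.symm j ↔ σ₂.symm i < σ₂.symm j := by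
  rcases h with h | h
  · exact iff_of_true (hσ₁ i j h) (hσ₂ i j h)
  · exact iff_of_false (hσ₁ j i h).not_gt (hσ₂ j i h).not_gt

theorem Equiv.Perm.mem_take_ofFn_iff (σ : Equiv.Perm (Fin m)) (n : ℕ) (j : Fin m) :
    j ∈ (List.ofFn σ).take n ↔ (σ.symm j : ℕ) < n := by
  rw [List.mem_take_iff_getElem]
  simp only [List.length_ofFn, List.getElem_ofFn]
  constructor
  · rintro ⟨t, ht, rfl⟩
    simp only [Equiv.symm_apply_apply]
    omega
  · intro h
    exact ⟨σ.symm j, by omega, by simp⟩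

theorem Equiv.Perm.pairwise_ofFn (σ : Equiv.Perm (Fin m)) :
    (List.ofFn σ).Pairwise (fun i j => σ.symm i < σ.symm j) :=
  List.pairwise_ofFn.mpr fun a b hab => by simpa using hab

theorem IsLinearExtension.pairwise_of_sublist (hσ : IsLinearExtension P σ) {l : List (Fin m)}
    (hl : l.Sublist (List.ofFn σ)) (hcomp : ∀ i ∈ l, ∀ j ∈ l, i ≠ j → P i j ∨ P j i) :
    l.Pairwise P := by
  refine (σ.pairwise_ofFn.sublist hl).imp_of_mem fun hi hj hlt => ?_
  rcases hcomp _ hi _ hj (fun h => (h ▸ hlt).false) with h | h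
  · exact h
  · exact absurd (hσ _ _ h) hlt.not_gt

theorem IsLinearExtension.filter_take_eq (hσ₁ : IsLinearExtension P σ₁)
    (hσ₂ : IsLinearExtension P σ₂) (q : Fin m → Bool)
    (hq : ∀ i j, i ≠ j → q i → q j → P i j ∨ P j i) {n₁ n₂ : ℕ}
    (hn : ∀ j, q j → ((σ₁.symm j : ℕ) < n₁ ↔ (σ₂.symm j : ℕ) < n₂)) :
    ((List.ofFn σ₁).take n₁).filter q = ((List.ofFn σ₂).take n₂).filter q := by
  have : Std.Asymm P := hσ₁.asymm
  have sorted {σ : Equiv.Perm (Fin m)} (hσ : IsLinearExtension P σ) (n : ℕ) :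
      (((List.ofFn σ).take n).filter q).Pairwise P :=
    hσ.pairwise_of_sublist (List.filter_sublist.trans (List.take_sublist n _))
      fun i hi j hj hij => hq i j hij (List.of_mem_filter hi) (List.of_mem_filter hj)
  refine (sorted hσ₁ n₁).eq_of_mem_iff (sorted hσ₂ n₂) fun j => ?_
  simp only [List.mem_filter, Equiv.Perm.mem_take_ofFn_iff]
  exact ⟨fun ⟨h, hj⟩ => ⟨(hn j hj).mp h, hj⟩, fun ⟨h, hj⟩ => ⟨(hn j hj).mpr h, hj⟩⟩

theorem execStore_take_ofFn_comp_apply (S : Fin m → Op K V) (σ : Equiv.Perm (Fin m)) (n : ℕ)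
    (k : K) (s : K → V) :
    execStore s ((List.ofFn (S ∘ σ)).take n) k =
      execStore s ((((List.ofFn σ).take n).filter fun j => (S j).writesTo k).map S) k := by
  rw [← execStore_filter_writesTo_apply, ← List.map_ofFn, ← List.map_take, List.filter_map]
  rfl

theorem IsLinearExtension.execStore_take_apply_eq (hσ₁ : IsLinearExtension P σ₁)
    (hσ₂ : IsLinearExtension P σ₂) (S : Fin m → Op K V) {k : K}
    (hS : ∀ i j, i ≠ j → (S i).writesTo k → (S j).writesTo k → P i j ∨ P j i) {n₁ n₂ : ℕ}
    (hn : ∀ j, (S j).writesTo k → ((σ₁.symm j : ℕ) < n₁ ↔ (σ₂.symm j : ℕ) < n₂))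
    (s : K → V) :
    execStore s ((List.ofFn (S ∘ σ₁)).take n₁) k =
      execStore s ((List.ofFn (S ∘ σ₂)).take n₂) k := by
  rw [execStore_take_ofFn_comp_apply, execStore_take_ofFn_comp_apply,
    hσ₁.filter_take_eq hσ₂ _ hS hn]

end

theorem safety_of_linear_extensions_general {m : ℕ} (S : Fin m → Op K V)
    (P : Fin m → Fin m → Prop)
    (hconf : ∀ i j : Fin m, i ≠ j → (S i).key = (S j).key →
      ((S i).isWrite ∨ (S j).isWrite) → P i j ∨ P j i)
    (σ₁ σ₂ : Equiv.Perm (Fin m))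
    (hσ₁ : ∀ i j : Fin m, P i j → σ₁.symm i < σ₁.symm j)
    (hσ₂ : ∀ i j : Fin m, P i j → σ₂.symm i < σ₂.symm j)
    (s₀ : K → V) :
    (∀ (i : Fin m) (k : K), S i = Op.read k →
      execStore s₀ ((List.ofFn (S ∘ σ₁)).take ((σ₁.symm i : Fin m) : ℕ)) k =
        execStore s₀ ((List.ofFn (S ∘ σ₂)).take ((σ₂.symm i : Fin m) : ℕ)) k) ∧
    execStore s₀ (List.ofFn (S ∘ σ₁)) = execStore s₀ (List.ofFn (S ∘ σ₂)) := by
  have hwrites (k : K) (i j : Fin m) (hij : i ≠ j) (hi : (S i).writesTo k)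
      (hj : (S j).writesTo k) : P i j ∨ P j i :=
    hconf i j hij ((Op.writesTo_iff.mp hi).1.trans (Op.writesTo_iff.mp hj).1.symm)
      (.inl (Op.writesTo_iff.mp hi).2)
  refine ⟨fun i k hread => IsLinearExtension.execStore_take_apply_eq hσ₁ hσ₂ S (hwrites k)
    (fun j hj => ?_) s₀, funext fun k => ?_⟩
  · obtain ⟨hkey, hwrite⟩ := Op.writesTo_iff.mp hj
    have hji : j ≠ i := by
      rintro rfl
      simp [hread, Op.isWrite] at hwrite
    exact IsLinearExtension.lt_iff_lt hσ₁ hσ₂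
      (hconf j i hji (by rw [hkey, hread]; rfl) (.inl hwrite))
  · simpa [List.take_of_length_le] using IsLinearExtension.execStore_take_apply_eq hσ₁ hσ₂ S
      (hwrites k) (n₁ := m) (n₂ := m) (fun j _ => by simp) s₀

/-- Safety of serialization (Theorem 7.1 + serializability): if a strict
partial order `P` on the positions of a schedule `S` orders every pair of
conflicting operations (same key, at least one write), then executing `S`
arranged according to any two linear extensions of `P` (given by permutations
`σ₁`, `σ₂` placing the operation of original position `σ t` at position `t`)
yields the same value for every read and the same final store. -/
theorem safety_of_linear_extensions {m : ℕ} (S : Fin m → Op K V)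
    (P : Fin m → Fin m → Prop)
    (hirr : ∀ i, ¬ P i i)
    (htrans : ∀ i j l, P i j → P j l → P i l)
    (hconf : ∀ i j : Fin m, i ≠ j → (S i).key = (S j).key →
      ((S i).isWrite ∨ (S j).isWrite) → P i j ∨ P j i)
    (σ₁ σ₂ : Equiv.Perm (Fin m))
    (hσ₁ : ∀ i j : Fin m, P i j → σ₁.symm i < σ₁.symm j)
    (hσ₂ : ∀ i j : Fin m, P i j → σ₂.symm i < σ₂.symm j)
    (s₀ : K → V) :
    (∀ (i : Fin m) (k : K), S i = Op.read k →
      execStore s₀ ((List.ofFn (S ∘ σ₁)).take ((σ₁.symm i : Fin m) : ℕ)) k =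
        execStore s₀ ((List.ofFn (S ∘ σ₂)).take ((σ₂.symm i : Fin m) : ℕ)) k) ∧
    execStore s₀ (List.ofFn (S ∘ σ₁)) = execStore s₀ (List.ofFn (S ∘ σ₂)) :=
  safety_of_linear_extensions_general S P hconf σ₁ σ₂ hσ₁ hσ₂ s₀
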